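/- arXiv:1109.4350 — 12 statements merged into one kernel-verified Lean document; each statement's English description precedes it below -/
import Mathlib

section
/- Let M and N be positive reals with M < N, κ = ⌈M/(N−M)⌉, and define d(M,N) = min(κM/(2κ−1), κN/(2κ+1)). If p is a positive integer with (p−1)/p ≤ M/N ≤ (2p−1)/(2p+1), then d(M,N) = pM/(2p−1). -/
noncomputable def kappa (M N : ℝ) : ℤ := ⌈M / (N - M)⌉

noncomputable def dof (M N : ℝ) : ℝ :=
  min ((kappa M N : ℝ) * M / (2 * (kappa M N : ℝ) - 1))
      ((kappa M N : ℝ) * N / (2 * (kappa M N : ℝ) + 1))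
theorem stmt1 (M N : ℝ) (hM : 0 < M) (hMN : M < N) (p : ℕ+)
    (h1 : ((p : ℝ) - 1) / (p : ℝ) ≤ M / N)
    (h2 : M / N ≤ (2 * (p : ℝ) - 1) / (2 * (p : ℝ) + 1)) :
    dof M N = (p : ℝ) * M / (2 * (p : ℝ) - 1) := by
  have hN : (0:ℝ) < N := hM.trans hMN
  have hNM : (0:ℝ) < N - M := by linarith
  have hp : (0:ℝ) < (p:ℝ) := by exact_mod_cast p.pos
  have hp1 : (1:ℝ) ≤ (p:ℝ) := by exact_mod_cast p.one_le
  -- cross multiplied hypotheses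
  have H1 : ((p:ℝ) - 1) * N ≤ (p:ℝ) * M := by
    have := (div_le_div_iff₀ hp hN).mp h1; linarith
  have H2 : M * (2*(p:ℝ)+1) ≤ (2*(p:ℝ)-1) * N := by
    have := (div_le_div_iff₀ hN (by linarith : (0:ℝ) < 2*(p:ℝ)+1)).mp h2; linarith
  set x := M / (N - M) with hx
  have hxlb : ((p:ℝ) - 1) ≤ x := by
    rw [hx, le_div_iff₀ hNM]; nlinarith
  have hxub : x ≤ (p:ℝ) - 1/2 := by
    rw [hx, div_le_iff₀ hNM]; nlinarith
  have hxpos : 0 < x := div_pos hM hNM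
  have hkub : kappa M N ≤ (p:ℤ) := by
    rw [kappa, Int.ceil_le]; push_cast; linarith
  have hklb : (p:ℤ) - 1 ≤ kappa M N := by
    have := Int.le_ceil x
    have : ((p:ℝ) - 1 : ℝ) ≤ ((⌈x⌉ : ℤ) : ℝ) := le_trans hxlb this
    rw [kappa]
    exact_mod_cast this
  have hkpos : 0 < kappa M N := by
    rw [kappa]; exact Int.ceil_pos.mpr hxpos
  rcases eq_or_lt_of_le hkub with hk | hk
  · -- κ = p
    rw [dof, hk]
    push_cast
    have h21 : (0:ℝ) < 2*(p:ℝ) - 1 := by linarith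
    rw [min_eq_left]
    rw [div_le_div_iff₀ h21 (by linarith : (0:ℝ) < 2*(p:ℝ)+1)]
    nlinarith
  · -- κ = p - 1
    have hk' : kappa M N = (p:ℤ) - 1 := le_antisymm (by omega) hklb
    have hp2 : (2:ℤ) ≤ (p:ℤ) := by omega
    have hp2' : (2:ℝ) ≤ (p:ℝ) := by exact_mod_cast hp2
    -- x ≤ p - 1, so x = p - 1, so pM = (p-1)N
    have hxub' : x ≤ (p:ℝ) - 1 := by
      have := Int.ceil_le.mp (le_of_eq hk')
      push_cast at this
      rw [hx]; exact this
    have hxeq : x = (p:ℝ) - 1 := le_antisymm hxub' hxlb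
    have hMN' : (p:ℝ) * M = ((p:ℝ) - 1) * N := by
      have : M = ((p:ℝ) - 1) * (N - M) := by
        rw [hx] at hxeq
        field_simp at hxeq
        linarith
      nlinarith
    rw [dof, hk']
    push_cast
    have h3 : (0:ℝ) < 2*((p:ℝ)-1) - 1 := by linarith
    have h4 : (0:ℝ) < 2*((p:ℝ)-1) + 1 := by linarith
    rw [min_eq_right]
    · rw [div_eq_div_iff h4.ne' (by linarith : (0:ℝ) < 2*(p:ℝ)-1).ne']
      nlinarith
    · rw [div_le_div_iff₀ h4 h3]
      nlinarith
end

section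
/- Let M and N be positive reals with M < N, κ = ⌈M/(N−M)⌉, and define d(M,N) = min(κM/(2κ−1), κN/(2κ+1)). If p is a positive integer with (2p−1)/(2p+1) ≤ M/N ≤ p/(p+1), then d(M,N) = pN/(2p+1). -/
theorem stmt2 (M N : ℝ) (hM : 0 < M) (hMN : M < N) (p : ℕ+)
    (h1 : (2 * (p : ℝ) - 1) / (2 * (p : ℝ) + 1) ≤ M / N)
    (h2 : M / N ≤ (p : ℝ) / ((p : ℝ) + 1)) :
    dof M N = (p : ℝ) * N / (2 * (p : ℝ) + 1) := by
  have hN : 0 < N := hM.trans hMN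
  have hNM : 0 < N - M := by linarith
  have hp : (1:ℝ) ≤ (p:ℝ) := by exact_mod_cast p.one_le
  have h1' : (2 * (p:ℝ) - 1) * N ≤ (2 * (p:ℝ) + 1) * M := by
    rw [div_le_div_iff₀ (by linarith) hN] at h1; linarith
  have h2' : M * ((p:ℝ) + 1) ≤ (p:ℝ) * N := by
    rw [div_le_div_iff₀ hN (by linarith)] at h2; linarith
  have hk : kappa M N = (p : ℤ) := by
    rw [kappa, Int.ceil_eq_iff]
    constructor
    · push_cast
      rw [lt_div_iff₀ hNM]
      nlinarith
    · push_cast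
      rw [div_le_iff₀ hNM]
      nlinarith
  rw [dof, hk]
  push_cast
  rw [min_eq_right]
  rw [div_le_div_iff₀ (by linarith) (by nlinarith)]
  nlinarith
end

section
/- Let M and N be positive reals with 1/2 ≤ M/N < 1, κ = ⌈M/(N−M)⌉, and d(M,N) = min(κM/(2κ−1), κN/(2κ+1)). Then d(M,N) ≥ MN/(M+N), with equality if and only if M/N = p/(p+1) for some positive integer p. -/
theorem stmt5 (M N : ℝ) (hM : 0 < M) (hMN : M < N) (h2 : N ≤ 2 * M) :
    M * N / (M + N) ≤ dof M N ∧
      (dof M N = M * N / (M + N) ↔ ∃ p : ℕ+, M / N = (p : ℝ) / ((p : ℝ) + 1)) := by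
  have hNM : 0 < N - M := by linarith
  have hN : 0 < N := by linarith
  have hk1 : (1:ℤ) ≤ kappa M N := by
    have : (0:ℤ) < kappa M N := Int.ceil_pos.mpr (div_pos hM hNM)
    omega
  have hc1 : (1:ℝ) ≤ ((kappa M N : ℤ) : ℝ) := by exact_mod_cast hk1
  set c : ℝ := ((kappa M N : ℤ) : ℝ) with hcdef
  have hle : M / (N - M) ≤ c := Int.le_ceil _
  have hlt : c < M / (N - M) + 1 := Int.ceil_lt_add_one _
  have hM1 : M ≤ c * (N - M) := by
    rw [div_le_iff₀ hNM] at hle; linarith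
  have hN1 : c * (N - M) < N := by
    have h' : (c - 1) * (N - M) < M := by
      rw [← lt_div_iff₀ hNM]; linarith
    nlinarith
  have d1 : (0:ℝ) < 2 * c - 1 := by linarith
  have d2 : (0:ℝ) < 2 * c + 1 := by linarith
  have hMN0 : (0:ℝ) < M + N := by linarith
  have hA : M * N / (M + N) < c * M / (2 * c - 1) := by
    rw [div_lt_div_iff₀ hMN0 d1]; nlinarith
  have hB : M * N / (M + N) ≤ c * N / (2 * c + 1) := by
    rw [div_le_div_iff₀ hMN0 d2]; nlinarith
  have hdof : dof M N = min (c * M / (2 * c - 1)) (c * N / (2 * c + 1)) := rfl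
  constructor
  · rw [hdof]
    exact le_min hA.le hB
  constructor
  · intro h
    rw [hdof] at h
    have hBeq : c * N / (2 * c + 1) = M * N / (M + N) := by
      by_contra hne
      have hBgt : M * N / (M + N) < c * N / (2 * c + 1) := lt_of_le_of_ne hB (Ne.symm hne)
      have := lt_min hA hBgt
      rw [h] at this
      exact lt_irrefl _ this
    rw [div_eq_div_iff d2.ne' hMN0.ne'] at hBeq
    have h0 : N * (c * (N - M) - M) = 0 := by linear_combination hBeq
    have hkey : c * (N - M) = M := by
      rcases mul_eq_zero.mp h0 with h' | h'
      · exact absurd h' hN.ne'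
      · linarith
    refine ⟨⟨(kappa M N).toNat, by omega⟩, ?_⟩
    have hcp : ((((kappa M N).toNat : ℕ)) : ℝ) = c := by
      rw [hcdef]
      exact_mod_cast Int.toNat_of_nonneg (by omega : (0:ℤ) ≤ kappa M N)
    show M / N = (((kappa M N).toNat : ℕ) : ℝ) / ((((kappa M N).toNat : ℕ) : ℝ) + 1)
    rw [hcp, div_eq_div_iff hN.ne' (by positivity : c + 1 ≠ 0)]
    linear_combination -hkey
  · rintro ⟨p, hp⟩
    have hp1 : (0:ℝ) < (p : ℝ) + 1 := by positivity
    rw [div_eq_div_iff hN.ne' hp1.ne'] at hp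
    have ht : M / (N - M) = ((p : ℕ) : ℝ) := by
      rw [div_eq_iff hNM.ne']
      push_cast at hp ⊢
      linear_combination hp
    have hkp : kappa M N = ((p : ℕ) : ℤ) := by
      unfold kappa
      rw [ht, Int.ceil_natCast]
    have hcp : c = ((p : ℕ) : ℝ) := by rw [hcdef, hkp]; push_cast; ring
    have hkey : c * (N - M) = M := by
      rw [hcp]
      push_cast at hp ⊢
      linear_combination -hp
    have hBeq : c * N / (2 * c + 1) = M * N / (M + N) := by
      rw [div_eq_div_iff d2.ne' hMN0.ne']
      linear_combination N * hkey
    rw [hdof, min_eq_right (by rw [hBeq]; exact hA.le)]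
    exact hBeq
end

section
/- Let M and N be positive reals with 1/2 ≤ M/N < 1, κ = ⌈M/(N−M)⌉, and d(M,N) = min(κM/(2κ−1), κN/(2κ+1)). Then d(M,N) ≤ (M+N)/4, with equality if and only if M/N = (2p−1)/(2p+1) for some positive integer p. -/
theorem stmt6 (M N : ℝ) (hM : 0 < M) (hMN : M < N) (h2 : N ≤ 2 * M) :
    dof M N ≤ (M + N) / 4 ∧
      (dof M N = (M + N) / 4 ↔
        ∃ p : ℕ+, M / N = (2 * (p : ℝ) - 1) / (2 * (p : ℝ) + 1)) := by
  have ht : 0 < N - M := by linarith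
  have hN : 0 < N := by linarith
  set k : ℤ := kappa M N with hkdef
  have hk1 : 1 ≤ k := by
    have : (0:ℤ) < k := Int.ceil_pos.mpr (div_pos hM ht)
    omega
  have hkr : (1:ℝ) ≤ (k:ℝ) := by exact_mod_cast hk1
  have hden1 : (0:ℝ) < 2*(k:ℝ) - 1 := by linarith
  have hden2 : (0:ℝ) < 2*(k:ℝ) + 1 := by linarith
  have hfour : (0:ℝ) < 4 := by norm_num
  have ha : ∀ x : ℝ, ((k:ℝ) * M / (2 * (k:ℝ) - 1) ≤ (M+N)/4 ↔
      M + N ≤ 2 * (k:ℝ) * (N - M)) := by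
    intro x
    rw [div_le_div_iff₀ hden1 hfour]
    constructor <;> intro h <;> nlinarith
  have hb : ((k:ℝ) * N / (2 * (k:ℝ) + 1) ≤ (M+N)/4 ↔
      2 * (k:ℝ) * (N - M) ≤ M + N) := by
    rw [div_le_div_iff₀ hden2 hfour]
    constructor <;> intro h <;> nlinarith
  have hmain : dof M N ≤ (M + N) / 4 := by
    rcases le_total (M + N) (2 * (k:ℝ) * (N - M)) with h | h
    · exact le_trans (min_le_left _ _) ((ha 0).mpr h)
    · exact le_trans (min_le_right _ _) (hb.mpr h)
  refine ⟨hmain, ?_, ?_⟩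
  · intro heq
    have hge : (M+N)/4 ≤ dof M N := le_of_eq heq.symm
    have h1 : (M+N)/4 ≤ (k:ℝ) * M / (2 * (k:ℝ) - 1) :=
      le_trans hge (min_le_left _ _)
    have h2' : (M+N)/4 ≤ (k:ℝ) * N / (2 * (k:ℝ) + 1) :=
      le_trans hge (min_le_right _ _)
    have e1 : 2 * (k:ℝ) * (N - M) ≤ M + N := by
      rw [div_le_div_iff₀ hfour hden1] at h1
      nlinarith
    have e2 : M + N ≤ 2 * (k:ℝ) * (N - M) := by
      rw [div_le_div_iff₀ hfour hden2] at h2'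
      nlinarith
    have heq2 : 2 * (k:ℝ) * (N - M) = M + N := le_antisymm e1 e2
    have hk0 : 0 < k.toNat := by omega
    refine ⟨⟨k.toNat, hk0⟩, ?_⟩
    have hpk : ((k.toNat : ℕ) : ℝ) = (k:ℝ) := by
      exact_mod_cast Int.toNat_of_nonneg (by omega : (0:ℤ) ≤ k)
    show M / N = (2 * ((k.toNat : ℕ):ℝ) - 1) / (2 * ((k.toNat : ℕ):ℝ) + 1)
    rw [hpk, div_eq_div_iff hN.ne' hden2.ne']
    nlinarith
  · rintro ⟨p, hp⟩
    have hp1 : (1:ℝ) ≤ (p:ℝ) := by exact_mod_cast p.one_le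
    have hdp : (0:ℝ) < 2*(p:ℝ) + 1 := by linarith
    rw [div_eq_div_iff hN.ne' hdp.ne'] at hp
    -- hp : M * (2p+1) = (2p-1) * N
    have hratio : M / (N - M) = (p:ℝ) - 1/2 := by
      rw [div_eq_iff ht.ne']
      nlinarith
    have hkp : (k:ℝ) = (p:ℝ) := by
      have : k = (p : ℤ) := by
        rw [hkdef]
        unfold kappa
        rw [hratio]
        have : ((p:ℝ) - 1/2) = (-1/2 : ℝ) + ((p:ℤ) : ℝ) := by push_cast; ring
        rw [this, Int.ceil_add_intCast]
        norm_num
      exact_mod_cast this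
    rw [← hkp] at hp
    have hA : (k:ℝ) * M / (2 * (k:ℝ) - 1) = (M+N)/4 := by
      rw [div_eq_div_iff hden1.ne' hfour.ne']
      nlinarith
    have hB : (k:ℝ) * N / (2 * (k:ℝ) + 1) = (M+N)/4 := by
      rw [div_eq_div_iff hden2.ne' hfour.ne']
      nlinarith
    unfold dof
    rw [← hkdef, hA, hB, min_self]
end

section
/- Let M and N be positive reals with M < N, κ = ⌈M/(N−M)⌉, and d(M,N) = min(κM/(2κ−1), κN/(2κ+1)). If M ≤ M′ < N′ and N ≤ N′, then d(M,N) ≤ d(M′,N′) (where d(M′,N′) is defined with κ′ = ⌈M′/(N′−M′)⌉). -/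
lemma kappa_one_le (M N : ℝ) (hM : 0 < M) (hMN : M < N) : 1 ≤ kappa M N := by
  have h : (0:ℝ) < M / (N - M) := div_pos hM (by linarith)
  have := Int.ceil_pos.mpr h
  unfold kappa
  omega

lemma le_dof (M N : ℝ) (hM : 0 < M) (hMN : M < N) (j : ℤ) (hj : 1 ≤ j) :
    min ((j:ℝ) * M / (2 * (j:ℝ) - 1)) ((j:ℝ) * N / (2 * (j:ℝ) + 1)) ≤ dof M N := by
  have hκ1 : 1 ≤ kappa M N := kappa_one_le M N hM hMN
  set κ := kappa M N with hκdef
  have hNM : (0:ℝ) < N - M := by linarith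
  have hκR : (1:ℝ) ≤ (κ:ℝ) := by exact_mod_cast hκ1
  have hjR : (1:ℝ) ≤ (j:ℝ) := by exact_mod_cast hj
  have hN : (0:ℝ) < N := by linarith
  have hr1 : M / (N - M) ≤ (κ:ℝ) := Int.le_ceil _
  have hr2 : (κ:ℝ) < M / (N - M) + 1 := by
    have := Int.ceil_lt_add_one (M / (N - M))
    exact_mod_cast this
  rw [div_le_iff₀ hNM] at hr1
  rw [show M / (N - M) + 1 = (M + (N - M)) / (N - M) by field_simp] at hr2
  rw [lt_div_iff₀ hNM] at hr2
  have hA : ((κ:ℝ) + 1) * M ≤ (κ:ℝ) * N := by nlinarith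
  have hB : ((κ:ℝ) - 1) * N ≤ (κ:ℝ) * M := by nlinarith
  unfold dof
  rw [← hκdef]
  rcases lt_trichotomy j κ with h | h | h
  · have hjκ : (j:ℝ) ≤ (κ:ℝ) - 1 := by
      have : (j:ℝ) + 1 ≤ (κ:ℝ) := by exact_mod_cast h
      linarith
    refine le_trans (min_le_right _ _) (le_min ?_ ?_)
    · rw [div_le_div_iff₀ (by linarith) (by linarith)]
      nlinarith
    · rw [div_le_div_iff₀ (by linarith) (by linarith)]
      nlinarith
  · rw [h]
  · have hjκ : (κ:ℝ) + 1 ≤ (j:ℝ) := by exact_mod_cast h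
    refine le_trans (min_le_left _ _) (le_min ?_ ?_)
    · rw [div_le_div_iff₀ (by linarith) (by linarith)]
      nlinarith
    · rw [div_le_div_iff₀ (by linarith) (by linarith)]
      nlinarith

theorem stmt8 (M N M' N' : ℝ) (hM : 0 < M) (hMN : M < N)
    (hM' : 0 < M') (hMN' : M' < N') (h1 : M ≤ M') (h2 : N ≤ N') :
    dof M N ≤ dof M' N' := by
  have hκ1 : 1 ≤ kappa M N := kappa_one_le M N hM hMN
  have hκR : (1:ℝ) ≤ ((kappa M N : ℤ):ℝ) := by exact_mod_cast hκ1
  have step : dof M N ≤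
      min ((kappa M N : ℝ) * M' / (2 * (kappa M N : ℝ) - 1))
          ((kappa M N : ℝ) * N' / (2 * (kappa M N : ℝ) + 1)) := by
    unfold dof
    refine min_le_min ?_ ?_ <;> gcongr <;> linarith
  exact step.trans (le_dof M' N' hM' hMN' (kappa M N) hκ1)
end

section
/- Let p be a positive integer and let M, N, N′ be positive reals such that both M/N and M/N′ lie in the closed interval [(p−1)/p, (2p−1)/(2p+1)] (with M < N and M < N′). Then d(M,N) = d(M,N′), where d(x,y) = min(κx/(2κ−1), κy/(2κ+1)) with κ = ⌈x/(y−x)⌉. (Receive-side dimensions are redundant on this segment.) -/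
lemma dof_eq_aux (p : ℕ+) (M N : ℝ) (hM : 0 < M) (hN : M < N)
    (ha1 : ((p : ℝ) - 1) / (p : ℝ) ≤ M / N)
    (ha2 : M / N ≤ (2 * (p : ℝ) - 1) / (2 * (p : ℝ) + 1)) :
    dof M N = (p : ℝ) * M / (2 * (p : ℝ) - 1) := by
  have hq : (1 : ℝ) ≤ (p : ℝ) := by exact_mod_cast p.one_le
  have hN0 : 0 < N := hM.trans hN
  have hNM : 0 < N - M := sub_pos.2 hN
  rw [div_le_div_iff₀ (by positivity) hN0] at ha1
  rw [div_le_div_iff₀ hN0 (by positivity)] at ha2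
  have h_lo : (p : ℝ) - 1 ≤ M / (N - M) := by
    rw [le_div_iff₀ hNM]; nlinarith
  have h_hi : M / (N - M) ≤ (p : ℝ) - 1 / 2 := by
    rw [div_le_iff₀ hNM]; nlinarith
  have hk_le : kappa M N ≤ (p : ℤ) := by
    apply Int.ceil_le.2
    push_cast
    linarith
  have hk_ge : (p : ℤ) - 1 ≤ kappa M N := by
    have h1 : ((p : ℤ) - 1 : ℝ) ≤ M / (N - M) := by push_cast; linarith
    exact_mod_cast h1.trans (Int.le_ceil _)
  have hk_pos : 1 ≤ kappa M N := by
    apply Int.le_ceil_iff.2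
    have : 0 < M / (N - M) := by positivity
    push_cast
    linarith
  have hcase : kappa M N = (p : ℤ) - 1 ∨ kappa M N = (p : ℤ) := by omega
  rcases hcase with hk | hk
  · -- boundary case: M/(N-M) = p - 1, p ≥ 2
    have hp2 : (2 : ℝ) ≤ (p : ℝ) := by
      have : (2 : ℤ) ≤ (p : ℤ) := by omega
      exact_mod_cast this
    have hx_le : M / (N - M) ≤ (p : ℝ) - 1 := by
      have := Int.ceil_le.1 hk.le
      push_cast at this
      linarith
    have hx : M / (N - M) = (p : ℝ) - 1 := le_antisymm hx_le h_lo
    have heq : M = ((p : ℝ) - 1) * (N - M) := (div_eq_iff hNM.ne').1 hx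
    unfold dof
    rw [hk]
    push_cast
    have hEq2 : ((p : ℝ) - 1) * N / (2 * ((p : ℝ) - 1) + 1) =
        (p : ℝ) * M / (2 * (p : ℝ) - 1) := by
      have hnum : ((p : ℝ) - 1) * N = (p : ℝ) * M := by nlinarith
      rw [hnum]; ring_nf
    rw [min_eq_right, hEq2]
    rw [hEq2, div_le_div_iff₀ (by linarith) (by linarith)]
    nlinarith
  · unfold dof
    rw [hk]
    push_cast
    rw [min_eq_left (by
      rw [div_le_div_iff₀ (by linarith) (by linarith)]
      nlinarith)]

theorem stmt9 (p : ℕ+) (M N N' : ℝ) (hM : 0 < M) (hN : M < N) (hN' : M < N')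
    (ha1 : ((p : ℝ) - 1) / (p : ℝ) ≤ M / N)
    (ha2 : M / N ≤ (2 * (p : ℝ) - 1) / (2 * (p : ℝ) + 1))
    (hb1 : ((p : ℝ) - 1) / (p : ℝ) ≤ M / N')
    (hb2 : M / N' ≤ (2 * (p : ℝ) - 1) / (2 * (p : ℝ) + 1)) :
    dof M N = dof M N' := by
  rw [dof_eq_aux p M N hM hN ha1 ha2, dof_eq_aux p M N' hM hN' hb1 hb2]
end

section
/- Let p be a positive integer and let M, M′, N be positive reals such that both M/N and M′/N lie in the closed interval [(2p−1)/(2p+1), p/(p+1)] (with M < N and M′ < N). Then d(M,N) = d(M′,N), where d(x,y) = min(κx/(2κ−1), κy/(2κ+1)) with κ = ⌈x/(y−x)⌉. (Transmit-side dimensions are redundant on this segment.) -/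
lemma dof_aux (p : ℕ+) (M N : ℝ) (hN : 0 < N) (hM : M < N) (hMpos : 0 < M)
    (ha1 : (2 * (p : ℝ) - 1) / (2 * (p : ℝ) + 1) ≤ M / N)
    (ha2 : M / N ≤ (p : ℝ) / ((p : ℝ) + 1)) :
    dof M N = (p : ℝ) * N / (2 * (p : ℝ) + 1) := by
  have hp : (1 : ℝ) ≤ (p : ℝ) := by exact_mod_cast p.one_le
  have hnm : 0 < N - M := by linarith
  have hden : (0:ℝ) < 2 * (p : ℝ) + 1 := by linarith
  have hden' : (0:ℝ) < 2 * (p : ℝ) - 1 := by linarith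
  have h1 : (2 * (p : ℝ) - 1) * N ≤ (2 * (p : ℝ) + 1) * M := by
    have := (div_le_div_iff₀ hden hN).mp ha1
    linarith
  have h2 : ((p:ℝ) + 1) * M ≤ (p:ℝ) * N := by
    have := (div_le_div_iff₀ hN (by linarith : (0:ℝ) < (p:ℝ)+1)).mp ha2
    linarith
  have hk : kappa M N = (p : ℤ) := by
    rw [kappa, Int.ceil_eq_iff]
    constructor
    · push_cast
      rw [lt_div_iff₀ hnm]
      nlinarith
    · push_cast
      rw [div_le_iff₀ hnm]
      nlinarith
  rw [dof, hk]
  push_cast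
  apply min_eq_right
  rw [div_le_div_iff₀ hden hden']
  nlinarith

theorem stmt10 (p : ℕ+) (M M' N : ℝ) (hN : 0 < N) (hM : M < N) (hM' : M' < N)
    (hMpos : 0 < M) (hM'pos : 0 < M')
    (ha1 : (2 * (p : ℝ) - 1) / (2 * (p : ℝ) + 1) ≤ M / N)
    (ha2 : M / N ≤ (p : ℝ) / ((p : ℝ) + 1))
    (hb1 : (2 * (p : ℝ) - 1) / (2 * (p : ℝ) + 1) ≤ M' / N)
    (hb2 : M' / N ≤ (p : ℝ) / ((p : ℝ) + 1)) :
    dof M N = dof M' N := by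
  rw [dof_aux p M N hN hM hMpos ha1 ha2, dof_aux p M' N hN hM' hM'pos hb1 hb2]
end

section
/- Let p be a positive integer and let M, N be positive reals with M/N = (2p−1)/(2p+1). Then for every ε with 0 < ε < M, d(M−ε, N) < d(M,N), and for every ε with 0 < ε < N−M, d(M, N−ε) < d(M,N). (At ratios in the set B = {(2p−1)/(2p+1)}, neither M nor N contains redundant dimensions.) -/
theorem stmt11 (p : ℕ+) (M N : ℝ) (hM : 0 < M) (hMN : M < N)
    (hr : M / N = (2 * (p : ℝ) - 1) / (2 * (p : ℝ) + 1)) :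
    (∀ ε : ℝ, 0 < ε → ε < M → dof (M - ε) N < dof M N) ∧
    (∀ ε : ℝ, 0 < ε → ε < N - M → dof M (N - ε) < dof M N) := by
  have hq : (1:ℝ) ≤ (p:ℝ) := by exact_mod_cast p.one_le
  have hNM : 0 < N - M := by linarith
  have hN : 0 < N := by linarith
  have h2p1 : (0:ℝ) < 2*(p:ℝ)+1 := by linarith
  have h2p1' : (0:ℝ) < 2*(p:ℝ)-1 := by linarith
  rw [div_eq_div_iff hN.ne' h2p1.ne'] at hr
  have hkey : 2*M = (2*(p:ℝ)-1)*(N-M) := by linear_combination hr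
  have hratio : M / (N - M) = (p:ℝ) - 1/2 := by
    rw [div_eq_iff hNM.ne']; linarith
  have hk : kappa M N = (p : ℤ) := by
    unfold kappa
    rw [hratio, Int.ceil_eq_iff]
    constructor <;> push_cast <;> linarith
  have heq : (p:ℝ) * M / (2*(p:ℝ)-1) = (p:ℝ) * N / (2*(p:ℝ)+1) := by
    rw [div_eq_div_iff h2p1'.ne' h2p1.ne']; nlinarith [hkey]
  have hd1 : dof M N = (p:ℝ) * M / (2*(p:ℝ)-1) := by
    unfold dof; rw [hk]; push_cast
    rw [min_eq_left (le_of_eq heq)]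
  have hd2 : dof M N = (p:ℝ) * N / (2*(p:ℝ)+1) := by rw [hd1, heq]
  constructor
  · intro ε hε hεM
    set k : ℤ := kappa (M - ε) N with hkdef
    have hMε : 0 < M - ε := by linarith
    have hNMε : 0 < N - (M - ε) := by linarith
    have hk1 : 1 ≤ k := by
      rw [hkdef]; unfold kappa
      exact Int.ceil_pos.mpr (div_pos hMε hNMε)
    have hkp : k ≤ (p : ℤ) := by
      rw [hkdef]; unfold kappa
      rw [Int.ceil_le, div_le_iff₀ hNMε]
      push_cast; nlinarith [hkey, hε, hq]
    have hk1r : (1:ℝ) ≤ (k:ℝ) := by exact_mod_cast hk1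
    have hkd : dof (M - ε) N =
        min ((k:ℝ) * (M-ε) / (2*(k:ℝ)-1)) ((k:ℝ) * N / (2*(k:ℝ)+1)) := by
      unfold dof; rw [← hkdef]
    rcases eq_or_lt_of_le hkp with h | h
    · calc dof (M - ε) N ≤ (k:ℝ) * (M-ε) / (2*(k:ℝ)-1) := by rw [hkd]; exact min_le_left _ _
        _ = (p:ℝ) * (M-ε) / (2*(p:ℝ)-1) := by rw [h]; push_cast; ring
        _ < (p:ℝ) * M / (2*(p:ℝ)-1) := by gcongr; linarith
        _ = dof M N := hd1.symm
    · have hkr : (k:ℝ) < (p:ℝ) := by exact_mod_cast h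
      calc dof (M - ε) N ≤ (k:ℝ) * N / (2*(k:ℝ)+1) := by rw [hkd]; exact min_le_right _ _
        _ < (p:ℝ) * N / (2*(p:ℝ)+1) := by
            rw [div_lt_div_iff₀ (by linarith) h2p1]; nlinarith [hN, hkr]
        _ = dof M N := hd2.symm
  · intro ε hε hεNM
    set k : ℤ := kappa M (N - ε) with hkdef
    have hNεM : 0 < (N - ε) - M := by linarith
    have hkp : (p : ℤ) ≤ k := by
      rw [hkdef]; unfold kappa
      have : ((p:ℤ) - 1 : ℤ) < ⌈M / (N - ε - M)⌉ := by
        rw [Int.lt_ceil, lt_div_iff₀ hNεM]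
        push_cast; nlinarith [hkey, hε, hq]
      omega
    have hk1 : 1 ≤ k := le_trans (by exact_mod_cast p.one_le) hkp
    have hk1r : (1:ℝ) ≤ (k:ℝ) := by exact_mod_cast hk1
    have hkd : dof M (N - ε) =
        min ((k:ℝ) * M / (2*(k:ℝ)-1)) ((k:ℝ) * (N-ε) / (2*(k:ℝ)+1)) := by
      unfold dof; rw [← hkdef]
    rcases eq_or_lt_of_le hkp with h | h
    · calc dof M (N - ε) ≤ (k:ℝ) * (N-ε) / (2*(k:ℝ)+1) := by rw [hkd]; exact min_le_right _ _
        _ = (p:ℝ) * (N-ε) / (2*(p:ℝ)+1) := by rw [← h]; push_cast; ring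
        _ < (p:ℝ) * N / (2*(p:ℝ)+1) := by gcongr; linarith
        _ = dof M N := hd2.symm
    · have hkr : (p:ℝ) < (k:ℝ) := by exact_mod_cast h
      calc dof M (N - ε) ≤ (k:ℝ) * M / (2*(k:ℝ)-1) := by rw [hkd]; exact min_le_left _ _
        _ < (p:ℝ) * M / (2*(p:ℝ)-1) := by
            rw [div_lt_div_iff₀ (by linarith) h2p1']; nlinarith [hM, hkr]
        _ = dof M N := hd1.symm
end

section
/- Let p be a positive integer and let M, N be positive reals with M/N = p/(p+1). Then there exist ε₁ > 0 and ε₂ > 0 such that d(M−ε, N) = d(M,N) for all 0 ≤ ε ≤ ε₁ and d(M, N−ε) = d(M,N) for all 0 ≤ ε ≤ ε₂. (At ratios in the set A = {p/(p+1)}, both M and N contain redundant dimensions.) -/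
theorem stmt12 (p : ℕ+) (M N : ℝ) (hM : 0 < M) (hMN : M < N)
    (hr : M / N = (p : ℝ) / ((p : ℝ) + 1)) :
    ∃ ε₁ > (0 : ℝ), ∃ ε₂ > (0 : ℝ),
      (∀ ε : ℝ, 0 ≤ ε → ε ≤ ε₁ → dof (M - ε) N = dof M N) ∧
      (∀ ε : ℝ, 0 ≤ ε → ε ≤ ε₂ → dof M (N - ε) = dof M N) := by
  set q : ℝ := (p : ℝ) with hqdef
  have hq1 : (1 : ℝ) ≤ q := by
    exact Nat.one_le_cast.mpr p.pos
  have hq0 : 0 < q := by linarith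
  have hN : 0 < N := lt_trans hM hMN
  have hpm : (q + 1) * M = q * N := by
    have hN' : N ≠ 0 := ne_of_gt hN
    have hq' : q + 1 ≠ 0 := by linarith
    field_simp at hr
    linarith
  set D : ℝ := N - M with hDdef
  have hD : 0 < D := by linarith
  have hMD : M = q * D := by nlinarith [hpm]
  have hDk : 0 < 2 * q + 1 := by linarith
  have hDk' : 0 < 2 * q - 1 := by linarith
  have hk0 : kappa M N = (p : ℤ) := by
    unfold kappa
    rw [Int.ceil_eq_iff]
    have hden : 0 < N - M := hD
    constructor
    · push_cast
      rw [lt_div_iff₀ hden]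
      nlinarith
    · push_cast
      rw [div_le_iff₀ hden]
      nlinarith
  have hmin0 : min (q * M / (2 * q - 1)) (q * N / (2 * q + 1)) = q * N / (2 * q + 1) := by
    rw [min_eq_right]
    rw [div_le_div_iff₀ hDk hDk']
    nlinarith
  refine ⟨D / (2 * q + 1), by positivity, D / (2 * q + 1), by positivity, ?_, ?_⟩
  · intro ε hε0 hε1
    have hε1' : ε * (2 * q + 1) ≤ D := (le_div_iff₀ hDk).mp hε1
    have hk1 : kappa (M - ε) N = (p : ℤ) := by
      unfold kappa
      rw [Int.ceil_eq_iff]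
      have hden : 0 < N - (M - ε) := by linarith
      constructor
      · push_cast
        rw [lt_div_iff₀ hden]
        nlinarith
      · push_cast
        rw [div_le_iff₀ hden]
        nlinarith
    simp only [dof, hk1, hk0]
    push_cast
    rw [hmin0, min_eq_right]
    rw [div_le_div_iff₀ hDk hDk']
    nlinarith
  · intro ε hε0 hε2
    rcases eq_or_lt_of_le hε0 with h0 | h0
    · rw [← h0]; simp
    have hε2' : ε * (2 * q + 1) ≤ D := (le_div_iff₀ hDk).mp hε2
    have hεD : ε < D := by nlinarith
    have hk2 : kappa M (N - ε) = (p : ℤ) + 1 := by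
      unfold kappa
      rw [Int.ceil_eq_iff]
      have hden : 0 < N - ε - M := by linarith
      constructor
      · push_cast
        rw [lt_div_iff₀ hden]
        nlinarith
      · push_cast
        rw [div_le_iff₀ hden]
        nlinarith
    simp only [dof, hk2, hk0]
    push_cast
    rw [hmin0, min_eq_left]
    · rw [div_eq_div_iff (ne_of_gt (by linarith : (0:ℝ) < 2 * (q + 1) - 1)) (ne_of_gt hDk)]
      linear_combination (2 * q + 1) * hpm
    · rw [div_le_div_iff₀ (by linarith : (0:ℝ) < 2 * (q + 1) - 1) (by linarith : (0:ℝ) < 2 * (q + 1) + 1)]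
      have h1 : (0:ℝ) ≤ (q + 1) * (D - ε * (2 * q + 1)) :=
        mul_nonneg (by linarith) (by linarith)
      nlinarith [h1, hMD, hDdef]
end

section
/- Let γ be a rational number with 1/3 ≤ γ < 1 that is not of the form (2p−1)/(2p+1) for any positive integer p. Then there exist positive integers M, N with M/N = γ, M < N, such that (M+N)/4 is an integer and (M+N)/4 > d(M,N), where d(M,N) = min(κM/(2κ−1), κN/(2κ+1)) with κ = ⌈M/(N−M)⌉ if M/N > 1/2, and d(M,N) = N/3 if 1/3 ≤ M/N ≤ 1/2. (There exist strictly proper but information-theoretically infeasible systems for every such ratio.) -/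
noncomputable def dBound (M N : ℝ) : ℝ := if 1 / 2 < M / N then dof M N else N / 3

theorem stmt13 (γ : ℚ) (h1 : 1 / 3 ≤ γ) (h2 : γ < 1)
    (h3 : ∀ p : ℕ+, γ ≠ (2 * (p : ℚ) - 1) / (2 * (p : ℚ) + 1)) :
    ∃ M N : ℕ, 0 < M ∧ M < N ∧ (M : ℚ) / (N : ℚ) = γ ∧
      (∃ k : ℕ, M + N = 4 * k) ∧
      dBound (M : ℝ) (N : ℝ) < ((M : ℝ) + (N : ℝ)) / 4 := by
  have hγpos : 0 < γ := lt_of_lt_of_le (by norm_num) h1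
  have hnum : 0 < γ.num := Rat.num_pos.mpr hγpos
  set a : ℕ := γ.num.toNat with ha
  set b : ℕ := γ.den with hb
  have haq : (a : ℤ) = γ.num := Int.toNat_of_nonneg hnum.le
  have hapos : 0 < a := by omega
  have hab : a < b := by
    have h := Rat.lt_one_iff_num_lt_denom.mpr h2
    have : (a : ℤ) < (b : ℤ) := by rw [haq]; exact_mod_cast h
    exact_mod_cast this
  have hbQ : (b : ℚ) ≠ 0 := by positivity
  have hratio : ((4 * a : ℕ) : ℚ) / ((4 * b : ℕ) : ℚ) = γ := by
    push_cast
    rw [mul_div_mul_left _ _ (by norm_num : (4:ℚ) ≠ 0)]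
    have : (a : ℚ) = (γ.num : ℚ) := by exact_mod_cast haq
    rw [this, hb]
    exact Rat.num_div_den γ
  refine ⟨4 * a, 4 * b, by omega, by omega, hratio, ⟨a + b, by ring⟩, ?_⟩
  set x : ℝ := ((4 * a : ℕ) : ℝ) with hxdef
  set y : ℝ := ((4 * b : ℕ) : ℝ) with hydef
  have hx : 0 < x := by positivity
  have hy : 0 < y := by rw [hydef]; positivity
  have hxy : x < y := by
    rw [hxdef, hydef]; exact_mod_cast (by omega : 4 * a < 4 * b)
  have hr : x / y = (γ : ℝ) := by
    rw [hxdef, hydef]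
    have h := congrArg (fun q : ℚ => (q : ℝ)) hratio
    push_cast at h
    exact_mod_cast h
  rw [dBound]
  split_ifs with hcond
  · -- case 1/2 < x/y
    set k : ℤ := kappa x y with hkdef
    have hk1 : 1 ≤ k := by
      have : 0 < x / (y - x) := div_pos hx (by linarith)
      have := Int.ceil_pos.mpr this
      rw [hkdef, kappa]; omega
    set kr : ℝ := (k : ℝ) with hkr
    have hkr1 : 1 ≤ kr := by rw [hkr]; exact_mod_cast hk1
    have hd1 : 0 < 2 * kr - 1 := by linarith
    have hd2 : 0 < 2 * kr + 1 := by linarith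
    -- γ ≠ (2k-1)/(2k+1)
    have hqne : γ ≠ (2 * (k : ℚ) - 1) / (2 * (k : ℚ) + 1) := by
      set p : ℕ+ := ⟨k.toNat, by omega⟩ with hpdef
      have hp := h3 p
      have hcast : ((p : ℕ) : ℚ) = (k : ℚ) := by
        show ((k.toNat : ℕ) : ℚ) = (k : ℚ)
        exact_mod_cast congrArg (fun z : ℤ => (z : ℚ))
          (Int.toNat_of_nonneg (by omega : (0:ℤ) ≤ k))
      rwa [hcast] at hp
    have hneq : (γ : ℝ) ≠ (2 * kr - 1) / (2 * kr + 1) := by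
      intro heq
      apply hqne
      have : ((γ : ℝ)) = (((2 * (k : ℚ) - 1) / (2 * (k : ℚ) + 1) : ℚ) : ℝ) := by
        push_cast
        exact heq
      exact_mod_cast this
    by_contra hcon
    push_neg at hcon
    rw [dof, ← hkdef, ← hkr] at hcon
    obtain ⟨hA, hB⟩ := le_min_iff.mp hcon
    have e1 : (x + y) * (2 * kr - 1) ≤ 4 * (kr * x) := by
      have := (div_le_div_iff₀ (by norm_num : (0:ℝ) < 4) hd1).mp hA
      linarith
    have e2 : (x + y) * (2 * kr + 1) ≤ 4 * (kr * y) := by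
      have := (div_le_div_iff₀ (by norm_num : (0:ℝ) < 4) hd2).mp hB
      linarith
    have heq1 : (x + y) * (2 * kr - 1) = 4 * (kr * x) := by nlinarith
    have : x * (2 * kr + 1) = y * (2 * kr - 1) := by nlinarith
    apply hneq
    rw [← hr]
    rw [div_eq_div_iff hy.ne' hd2.ne']
    linarith [this]
  · -- case x/y ≤ 1/2 : need y/3 < (x+y)/4, i.e. y < 3x
    have h13 : (1 : ℚ) / 3 < γ := by
      rcases lt_or_eq_of_le h1 with h | h
      · exact h
      · exfalso
        exact h3 1 (by rw [← h]; norm_num)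
    have : (1 : ℝ) / 3 < x / y := by
      rw [hr]
      have h := (Rat.cast_lt (K := ℝ)).mpr h13
      push_cast at h
      linarith
    have hylt : y < 3 * x := by
      have := (div_lt_div_iff₀ (by norm_num : (0:ℝ) < 3) hy).mp this
      linarith
    linarith
end

section
/- Let M, N be positive reals with 1/2 < M/N ≤ 3/5. Then the two-user cooperation bound min(3M, 3N, max(M, 2N), max(2M, N)) equals 2M, hence the per-user DoF outer bound 2M/3 obtained from cooperation coincides with d(M,N) = min(κM/(2κ−1), κN/(2κ+1)) where κ = ⌈M/(N−M)⌉ = 2. -/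
theorem stmt15 (M N : ℝ) (hM : 0 < M) (hMN : M < N)
    (h1 : N / 2 < M) (h2 : M ≤ 3 * N / 5) :
    min (min (3 * M) (3 * N)) (min (max M (2 * N)) (max (2 * M) N)) = 2 * M ∧
    kappa M N = 2 ∧
    2 * M / 3 = dof M N := by
  have hd : 0 < N - M := by linarith
  have hk : kappa M N = 2 := by
    unfold kappa
    rw [Int.ceil_eq_iff]
    constructor
    · rw [lt_div_iff₀ hd]; push_cast; linarith
    · rw [div_le_iff₀ hd]; push_cast; linarith
  refine ⟨?_, hk, ?_⟩
  · rw [min_eq_left (by linarith : 3*M ≤ 3*N),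
      max_eq_right (by linarith : M ≤ 2*N),
      max_eq_left (by linarith : N ≤ 2*M),
      min_eq_right (by linarith : 2*M ≤ 2*N),
      min_eq_right (by linarith : 2*M ≤ 3*M)]
  · unfold dof
    rw [hk]
    push_cast
    rw [min_eq_left (by rw [div_le_div_iff₀ (by norm_num) (by norm_num)]; linarith)]
    ring
end

section
/- For all matrices a, b, c ∈ ℂ^{5×3}, the 15×15 block matrix G′ = [[0, b, 0, 0, a], [a, b, 0, c, 0], [a, 0, b, 0, 0]] (each block of size 5×3, 0 denoting the 5×3 zero block) is singular. Consequently, 6/5 DoF per user is not achievable by this linear beamforming scheme with 5 symbol extensions over the constant 2×3 channel. -/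
open Matrix

theorem stmt17 (a b c : Matrix (Fin 5) (Fin 3) ℂ) :
    (Matrix.reindex finProdFinEquiv finProdFinEquiv
      (Matrix.of fun (pq : Fin 3 × Fin 5) (rs : Fin 5 × Fin 3) =>
        (![![0, b, 0, 0, a],
           ![a, b, 0, c, 0],
           ![a, 0, b, 0, 0]] pq.1 rs.1) pq.2 rs.2) :
      Matrix (Fin 15) (Fin 15) ℂ).det = 0 := by
  rw [← Matrix.exists_mulVec_eq_zero_iff]
  have h6 : ¬ Function.Injective (Matrix.fromCols a b).mulVecLin := by
    intro hinj
    have := LinearMap.finrank_le_finrank_of_injective hinj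
    simp [Module.finrank_fintype_fun_eq_card] at this
  obtain ⟨u₁, u₂, he, hne⟩ := Function.not_injective_iff.mp h6
  set u : Fin 3 ⊕ Fin 3 → ℂ := u₁ - u₂ with hu
  have hu0 : u ≠ 0 := sub_ne_zero.mpr hne
  have huk : Matrix.fromCols a b *ᵥ u = 0 := by
    have : (Matrix.fromCols a b).mulVecLin (u₁ - u₂) = 0 := by
      rw [map_sub, he, sub_self]
    simpa using this
  set x : Fin 3 → ℂ := fun s => u (.inl s) with hx
  set y : Fin 3 → ℂ := fun s => u (.inr s) with hy
  have huelim : Sum.elim x y = u := by funext i; cases i <;> rfl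
  have habxy : a *ᵥ x + b *ᵥ y = 0 := by
    rw [← Matrix.fromCols_mulVec_sumElim a b x y, huelim, huk]
  have key : ∀ q : Fin 5, (∑ i, a q i * x i) + (∑ i, b q i * y i) = 0 := by
    intro q
    have := congrFun habxy q
    simpa [Matrix.mulVec, dotProduct] using this
  set w : Fin 5 → Fin 3 → ℂ := ![x, y, y, 0, x] with hw
  have main : ∀ (p : Fin 3) (q : Fin 5),
      ∑ rs : Fin 5 × Fin 3,
        (![![0, b, 0, 0, a], ![a, b, 0, c, 0], ![a, 0, b, 0, 0]] p rs.1) q rs.2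
          * w rs.1 rs.2 = 0 := by
    intro p q
    fin_cases p <;>
      · simp [Fintype.sum_prod_type, Fin.sum_univ_five, hw]
        linear_combination key q
  refine ⟨fun j => w ((finProdFinEquiv.symm j : Fin 5 × Fin 3)).1
      ((finProdFinEquiv.symm j : Fin 5 × Fin 3)).2, ?_, ?_⟩
  · obtain ⟨i, hi⟩ := Function.ne_iff.mp hu0
    have hnz : ∃ r : Fin 5, ∃ s : Fin 3, w r s ≠ 0 := by
      cases i with
      | inl s => exact ⟨0, s, by simpa [hw] using hi⟩
      | inr s => exact ⟨1, s, by simpa [hw] using hi⟩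
    obtain ⟨r, s, hrs⟩ := hnz
    intro h0
    have := congrFun h0 ((finProdFinEquiv : Fin 5 × Fin 3 ≃ Fin 15) (r, s))
    rw [Equiv.symm_apply_apply] at this
    exact hrs this
  · funext i
    have hrw : ∀ f : Fin 15 → ℂ, ∑ j, f j = ∑ rs : Fin 5 × Fin 3, f (finProdFinEquiv rs) :=
      fun f => (Equiv.sum_comp (finProdFinEquiv : Fin 5 × Fin 3 ≃ Fin 15) f).symm
    simp only [Matrix.mulVec, dotProduct, Matrix.reindex_apply, Matrix.submatrix_apply,
      Matrix.of_apply, Pi.zero_apply]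
    rw [hrw]
    simp only [Equiv.symm_apply_apply]
    exact main (finProdFinEquiv.symm i).1 (finProdFinEquiv.symm i).2
end
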